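/- arXiv:math/0410577 — 4 statements merged into one kernel-verified Lean document; each statement's English description precedes it below -/
import Mathlib

section
/- Under the hypotheses of the integrability theorem (F: Δ → B(K,H) satisfying the Lipschitz conditions with constants γ₁, γ₂ on Δ = [a,b)×[c,d)), the operator Stieltjes integral satisfies the norm bound ‖∫_Δ F(λ,μ) dE(λ,μ)‖ ≤ 4 sup_{(λ,μ)∈Δ} ‖F(λ,μ)‖ + 2γ₁(b-a+d-c) + γ₂(b-a)(d-c). -/
open Set Complex Filter
open scoped InnerProductSpace Topology Classical

noncomputable section

variable {H K : Type*}
  [NormedAddCommGroup H] [InnerProductSpace ℂ H] [CompleteSpace H]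
  [NormedAddCommGroup K] [InnerProductSpace ℂ K] [CompleteSpace K]

/-- A projection-valued (spectral) measure on the Borel subsets of `ℂ`,
acting on the Hilbert space `K`. -/
structure SpectralMeasure (K : Type*) [NormedAddCommGroup K] [InnerProductSpace ℂ K]
    [CompleteSpace K] where
  proj : Set ℂ → K →L[ℂ] K
  selfAdjoint : ∀ {Ω : Set ℂ}, MeasurableSet Ω → IsSelfAdjoint (proj Ω)
  mul_inter : ∀ {Ω Ω' : Set ℂ}, MeasurableSet Ω → MeasurableSet Ω' →
    proj (Ω ∩ Ω') = (proj Ω).comp (proj Ω')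
  add_union : ∀ {Ω Ω' : Set ℂ}, MeasurableSet Ω → MeasurableSet Ω' → Disjoint Ω Ω' →
    proj (Ω ∪ Ω') = proj Ω + proj Ω'
  proj_univ : proj Set.univ = 1

/-- The spectral function `Ê(λ,μ) = E({x+iy : x < λ, y < μ})`. -/
def SpectralMeasure.hatE (E : SpectralMeasure K) (l m : ℝ) : K →L[ℂ] K :=
  E.proj {z : ℂ | z.re < l ∧ z.im < m}

/-- The half-open rectangle `[l,l') × i[m,m')` in `ℂ`. -/
def rectC (l l' m m' : ℝ) : Set ℂ :=
  {z : ℂ | l ≤ z.re ∧ z.re < l' ∧ m ≤ z.im ∧ z.im < m'}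

/-- A tagged partition of the half-open interval `[a,b)` into half-open subintervals,
with a sample point (tag) in each subinterval. -/
structure TaggedPartition (a b : ℝ) where
  n : ℕ
  npos : 0 < n
  pts : ℕ → ℝ
  tags : ℕ → ℝ
  mono : ∀ i < n, pts i < pts (i + 1)
  first : pts 0 = a
  last : pts n = b
  tag_mem : ∀ i < n, pts i ≤ tags i ∧ tags i < pts (i + 1)

/-- The mesh (maximal subinterval length) of a tagged partition. -/
def TaggedPartition.mesh {a b : ℝ} (P : TaggedPartition a b) : ℝ :=
  sSup {r : ℝ | ∃ i < P.n, r = P.pts (i + 1) - P.pts i}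

/-- The Riemann–Stieltjes sum `Σ_j Σ_k F(ξ_j,ζ_k) E(δ_j × ω_k)` for the right integral
`∫ F dE` over the rectangle `[a,b) × [c,d)`. -/
def rightSum (E : SpectralMeasure K) (F : ℝ → ℝ → (K →L[ℂ] H))
    {a b c d : ℝ} (P : TaggedPartition a b) (Q : TaggedPartition c d) : K →L[ℂ] H :=
  ∑ j ∈ Finset.range P.n, ∑ k ∈ Finset.range Q.n,
    (F (P.tags j) (Q.tags k)).comp
      (E.proj (rectC (P.pts j) (P.pts (j + 1)) (Q.pts k) (Q.pts (k + 1))))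

/-- The Riemann–Stieltjes sum `Σ_j Σ_k E(δ_j × ω_k) G(ξ_j,ζ_k)` for the left integral
`∫ dE G` over the rectangle `[a,b) × [c,d)`. -/
def leftSum (E : SpectralMeasure K) (G : ℝ → ℝ → (H →L[ℂ] K))
    {a b c d : ℝ} (P : TaggedPartition a b) (Q : TaggedPartition c d) : H →L[ℂ] K :=
  ∑ j ∈ Finset.range P.n, ∑ k ∈ Finset.range Q.n,
    (E.proj (rectC (P.pts j) (P.pts (j + 1)) (Q.pts k) (Q.pts (k + 1)))).comp
      (G (P.tags j) (Q.tags k))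

/-- `F` is right-integrable w.r.t. `dE` on `[a,b) × [c,d)` in the uniform operator
topology, with integral `J`. -/
def HasRightIntegralUnif (E : SpectralMeasure K) (F : ℝ → ℝ → (K →L[ℂ] H))
    (a b c d : ℝ) (J : K →L[ℂ] H) : Prop :=
  ∀ ε > 0, ∃ δ > 0, ∀ (P : TaggedPartition a b) (Q : TaggedPartition c d),
    P.mesh < δ → Q.mesh < δ → ‖rightSum E F P Q - J‖ < ε

/-- `F` is right-integrable in the strong operator topology. -/
def HasRightIntegralStrong (E : SpectralMeasure K) (F : ℝ → ℝ → (K →L[ℂ] H))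
    (a b c d : ℝ) (J : K →L[ℂ] H) : Prop :=
  ∀ x : K, ∀ ε > 0, ∃ δ > 0, ∀ (P : TaggedPartition a b) (Q : TaggedPartition c d),
    P.mesh < δ → Q.mesh < δ → ‖rightSum E F P Q x - J x‖ < ε

/-- `F` is right-integrable in the weak operator topology. -/
def HasRightIntegralWeak (E : SpectralMeasure K) (F : ℝ → ℝ → (K →L[ℂ] H))
    (a b c d : ℝ) (J : K →L[ℂ] H) : Prop :=
  ∀ (x : K) (y : H), ∀ ε > 0, ∃ δ > 0, ∀ (P : TaggedPartition a b) (Q : TaggedPartition c d),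
    P.mesh < δ → Q.mesh < δ → ‖⟪y, rightSum E F P Q x - J x⟫_ℂ‖ < ε

/-- `G` is left-integrable w.r.t. `dE` on `[a,b) × [c,d)` in the uniform operator
topology, with integral `J`. -/
def HasLeftIntegralUnif (E : SpectralMeasure K) (G : ℝ → ℝ → (H →L[ℂ] K))
    (a b c d : ℝ) (J : H →L[ℂ] K) : Prop :=
  ∀ ε > 0, ∃ δ > 0, ∀ (P : TaggedPartition a b) (Q : TaggedPartition c d),
    P.mesh < δ → Q.mesh < δ → ‖leftSum E G P Q - J‖ < ε

/-- `G` is left-integrable in the strong operator topology. -/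
def HasLeftIntegralStrong (E : SpectralMeasure K) (G : ℝ → ℝ → (H →L[ℂ] K))
    (a b c d : ℝ) (J : H →L[ℂ] K) : Prop :=
  ∀ x : H, ∀ ε > 0, ∃ δ > 0, ∀ (P : TaggedPartition a b) (Q : TaggedPartition c d),
    P.mesh < δ → Q.mesh < δ → ‖leftSum E G P Q x - J x‖ < ε

/-- `G` is left-integrable in the weak operator topology. -/
def HasLeftIntegralWeak (E : SpectralMeasure K) (G : ℝ → ℝ → (H →L[ℂ] K))
    (a b c d : ℝ) (J : H →L[ℂ] K) : Prop :=
  ∀ (x : H) (y : K), ∀ ε > 0, ∃ δ > 0, ∀ (P : TaggedPartition a b) (Q : TaggedPartition c d),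
    P.mesh < δ → Q.mesh < δ → ‖⟪y, leftSum E G P Q x - J x⟫_ℂ‖ < ε

/-- `E` is the spectral measure of the (possibly unbounded) normal operator `C`:
on the range of any spectral projection of a finite rectangle, `C` acts as the
operator Stieltjes integral `∫ z dE(z)`. -/
def SpectralMeasure.Represents (E : SpectralMeasure K) (C : K →ₗ.[ℂ] K) : Prop :=
  ∀ a b c d : ℝ, a < b → c < d → ∀ T : K →L[ℂ] K,
    HasLeftIntegralUnif E (fun l m => ((l : ℂ) + (m : ℂ) * Complex.I) • (1 : K →L[ℂ] K))
      a b c d T →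
    ∀ x : K, ∃ h : E.proj (rectC a b c d) x ∈ C.domain,
      C ⟨E.proj (rectC a b c d) x, h⟩ = T x

/-- The support of a spectral measure; for the spectral measure of a normal
operator `C` this is `spec(C)`. -/
def specSupp (E : SpectralMeasure K) : Set ℂ :=
  {z : ℂ | ∀ ε > 0, E.proj (Metric.ball z ε) ≠ 0}

/-- The set of finite sums `Σ_k ‖Y* E(Ω_k) Y‖` over finite systems of mutually
disjoint Borel subsets of `ℂ`. -/
def EnormSet (E : SpectralMeasure K) (Y : H →L[ℂ] K) : Set ℝ :=
  {r : ℝ | ∃ (n : ℕ) (Ω : ℕ → Set ℂ), (∀ i, MeasurableSet (Ω i)) ∧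
    (∀ i < n, ∀ j < n, i ≠ j → Disjoint (Ω i) (Ω j)) ∧
    r = ∑ i ∈ Finset.range n,
      ‖(ContinuousLinearMap.adjoint Y).comp ((E.proj (Ω i)).comp Y)‖}

/-- The norm `‖Y‖_E` of `Y` with respect to the spectral measure `E`. -/
def Enorm (E : SpectralMeasure K) (Y : H →L[ℂ] K) : ℝ :=
  Real.sqrt (sSup (EnormSet E Y))

/-- `R` is the (bounded, everywhere defined) resolvent `(A - ζ)⁻¹` of the possibly
unbounded operator `A` at the point `ζ`. -/
def IsResolventAt (A : H →ₗ.[ℂ] H) (ζ : ℂ) (R : H →L[ℂ] H) : Prop :=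
  ∃ hmem : ∀ x : H, R x ∈ A.domain,
    (∀ x : H, A ⟨R x, hmem x⟩ - ζ • R x = x) ∧
    (∀ f : A.domain, R (A f - ζ • (f : H)) = f)

/-- The resolvent set of a possibly unbounded operator. -/
def pmResolventSet (A : H →ₗ.[ℂ] H) : Set ℂ := {ζ : ℂ | ∃ R, IsResolventAt A ζ R}

/-- The spectrum of a possibly unbounded operator. -/
def pmSpectrum (A : H →ₗ.[ℂ] H) : Set ℂ := (pmResolventSet A)ᶜ

/-- The numerical range `W(A) = {⟨Ax,x⟩ : x ∈ Dom(A), ‖x‖ = 1}`. -/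
def numRange (A : H →ₗ.[ℂ] H) : Set ℂ :=
  {z : ℂ | ∃ f : A.domain, ‖(f : H)‖ = 1 ∧ z = ⟪(f : H), A f⟫_ℂ}

/-- `X` is a weak solution of the Sylvester equation `XA - CX = D`. -/
def IsWeakSolutionSylvester (A : H →ₗ.[ℂ] H) (C : K →ₗ.[ℂ] K) (D X : H →L[ℂ] K) : Prop :=
  ∀ (f : A.domain) (g : C.adjoint.domain),
    ⟪(g : K), X (A f)⟫_ℂ - ⟪C.adjoint g, X (f : H)⟫_ℂ = ⟪(g : K), D (f : H)⟫_ℂ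

/-- `X` is a strong solution of the Sylvester equation `XA - CX = D`. -/
def IsStrongSolutionSylvester (A : H →ₗ.[ℂ] H) (C : K →ₗ.[ℂ] K) (D X : H →L[ℂ] K) : Prop :=
  ∀ f : A.domain, ∃ h : X (f : H) ∈ C.domain,
    X (A f) - C ⟨X (f : H), h⟩ = D (f : H)

/-- `X` is a weak solution of the Riccati equation `XA - CX + XBX = D`. -/
def IsWeakSolutionRiccati (A : H →ₗ.[ℂ] H) (C : K →ₗ.[ℂ] K) (B : K →L[ℂ] H)
    (D X : H →L[ℂ] K) : Prop :=
  ∀ (f : A.domain) (g : C.adjoint.domain),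
    ⟪(g : K), X (A f)⟫_ℂ - ⟪C.adjoint g, X (f : H)⟫_ℂ
      + ⟪(g : K), X (B (X (f : H)))⟫_ℂ = ⟪(g : K), D (f : H)⟫_ℂ

/-- `X` is a strong solution of the Riccati equation `XA - CX + XBX = D`. -/
def IsStrongSolutionRiccati (A : H →ₗ.[ℂ] H) (C : K →ₗ.[ℂ] K) (B : K →L[ℂ] H)
    (D X : H →L[ℂ] K) : Prop :=
  ∀ f : A.domain, ∃ h : X (f : H) ∈ C.domain,
    X (A f) - C ⟨X (f : H), h⟩ + X (B (X (f : H))) = D (f : H)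

/-- The Riemann–Stieltjes sum for the left integral `∫_{spec(C) ∩ Ω} dE(ζ) G(ζ)`:
only partition rectangles meeting the spectrum contribute, with tags `tag j k`
chosen per rectangle. -/
def specLeftSum (E : SpectralMeasure K) (G : ℂ → (H →L[ℂ] K))
    {a b c d : ℝ} (P : TaggedPartition a b) (Q : TaggedPartition c d)
    (tag : ℕ → ℕ → ℂ) : H →L[ℂ] K :=
  ∑ j ∈ Finset.range P.n, ∑ k ∈ Finset.range Q.n,
    if (rectC (P.pts j) (P.pts (j + 1)) (Q.pts k) (Q.pts (k + 1)) ∩ specSupp E).Nonempty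
    then (E.proj (rectC (P.pts j) (P.pts (j + 1)) (Q.pts k) (Q.pts (k + 1)))).comp
      (G (tag j k))
    else 0

/-- Admissible tags for a spectral Riemann–Stieltjes sum: whenever a partition
rectangle meets the spectrum, the tag is taken in the intersection. -/
def ValidTags (E : SpectralMeasure K) {a b c d : ℝ}
    (P : TaggedPartition a b) (Q : TaggedPartition c d) (tag : ℕ → ℕ → ℂ) : Prop :=
  ∀ j < P.n, ∀ k < Q.n,
    (rectC (P.pts j) (P.pts (j + 1)) (Q.pts k) (Q.pts (k + 1)) ∩ specSupp E).Nonempty →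
    tag j k ∈ rectC (P.pts j) (P.pts (j + 1)) (Q.pts k) (Q.pts (k + 1)) ∩ specSupp E

/-- Convergence of `∫_{spec(C) ∩ ([a,b)×i[c,d))} dE(ζ) G(ζ)` in the strong operator
topology. -/
def HasSpecLeftIntegralStrong (E : SpectralMeasure K) (G : ℂ → (H →L[ℂ] K))
    (a b c d : ℝ) (J : H →L[ℂ] K) : Prop :=
  ∀ x : H, ∀ ε > 0, ∃ δ > 0, ∀ (P : TaggedPartition a b) (Q : TaggedPartition c d)
    (tag : ℕ → ℕ → ℂ), ValidTags E P Q tag → P.mesh < δ → Q.mesh < δ →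
    ‖specLeftSum E G P Q tag x - J x‖ < ε

/-- Convergence of `∫_{spec(C) ∩ ([a,b)×i[c,d))} dE(ζ) G(ζ)` in the uniform operator
topology. -/
def HasSpecLeftIntegralUnif (E : SpectralMeasure K) (G : ℂ → (H →L[ℂ] K))
    (a b c d : ℝ) (J : H →L[ℂ] K) : Prop :=
  ∀ ε > 0, ∃ δ > 0, ∀ (P : TaggedPartition a b) (Q : TaggedPartition c d)
    (tag : ℕ → ℕ → ℂ), ValidTags E P Q tag → P.mesh < δ → Q.mesh < δ →
    ‖specLeftSum E G P Q tag - J‖ < ε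

/-- The improper integral `∫_{spec(C)} dE(ζ) G(ζ)` in the strong operator topology:
the strong limit, over exhausting finite rectangles, of the integrals over
`spec(C) ∩ ([a,b) × i[c,d))`. -/
def HasImproperSpecLeftIntegralStrong (E : SpectralMeasure K) (G : ℂ → (H →L[ℂ] K))
    (J : H →L[ℂ] K) : Prop :=
  ∃ Jr : ℝ → ℝ → ℝ → ℝ → (H →L[ℂ] K),
    (∀ a b c d : ℝ, a < b → c < d → HasSpecLeftIntegralStrong E G a b c d (Jr a b c d)) ∧
    ∀ x : H, ∀ ε > 0, ∃ R : ℝ, ∀ a b c d : ℝ, a ≤ -R → R ≤ b → c ≤ -R → R ≤ d →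
      ‖Jr a b c d x - J x‖ < ε

/-- The improper integral `∫_{spec(C)} dE(ζ) G(ζ)` in the uniform operator topology. -/
def HasImproperSpecLeftIntegralUnif (E : SpectralMeasure K) (G : ℂ → (H →L[ℂ] K))
    (J : H →L[ℂ] K) : Prop :=
  ∃ Jr : ℝ → ℝ → ℝ → ℝ → (H →L[ℂ] K),
    (∀ a b c d : ℝ, a < b → c < d → HasSpecLeftIntegralUnif E G a b c d (Jr a b c d)) ∧
    ∀ ε > 0, ∃ R : ℝ, ∀ a b c d : ℝ, a ≤ -R → R ≤ b → c ≤ -R → R ≤ d →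
      ‖Jr a b c d - J‖ < ε

/-- The improper left integral `∫_{ℝ²} dE G` (uniform operator topology) as a limit
over exhausting finite rectangles. -/
def HasImproperLeftIntegralUnif (E : SpectralMeasure K) (G : ℝ → ℝ → (H →L[ℂ] K))
    (J : H →L[ℂ] K) : Prop :=
  ∃ Jr : ℝ → ℝ → ℝ → ℝ → (H →L[ℂ] K),
    (∀ a b c d : ℝ, a < b → c < d → HasLeftIntegralUnif E G a b c d (Jr a b c d)) ∧
    ∀ ε > 0, ∃ R : ℝ, ∀ a b c d : ℝ, a ≤ -R → R ≤ b → c ≤ -R → R ≤ d →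
      ‖Jr a b c d - J‖ < ε

/-! With `q j k = E([a, x_j) × [c, y_k))`, the projection of a partition rectangle is the mixed
second difference of `q`, so summing by parts in both variables turns a Riemann–Stieltjes sum into
a corner term `F(ξ_n, ζ_m) q_{n,m}`, two edge sums of first differences of `F` and a double sum of
mixed second differences of `F`, each composed with some `q`. Every `q` is an orthogonal
projection, so the Lipschitz conditions bound these four pieces by `sup ‖F‖`, `γ₁ (b - a)`,
`γ₁ (d - c)` and `γ₂ (b - a) (d - c)` uniformly in the partitions, and the bound passes to the
limit `J`. -/

section SummationByParts

variable {𝕜 : Type*} [NontriviallyNormedField 𝕜]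
  {X Y Z : Type*} [SeminormedAddCommGroup X] [NormedSpace 𝕜 X]
  [SeminormedAddCommGroup Y] [NormedSpace 𝕜 Y] [SeminormedAddCommGroup Z] [NormedSpace 𝕜 Z]

def rectDiff {V : Type*} [AddCommGroup V] (q : ℕ → ℕ → V) (j k : ℕ) : V :=
  q (j + 1) (k + 1) - q j (k + 1) - q (j + 1) k + q j k

theorem sum_range_comp_sub_of_zero (f : ℕ → Y →L[𝕜] Z) {g : ℕ → X →L[𝕜] Y} (hg : g 0 = 0)
    (n : ℕ) :
    ∑ j ∈ Finset.range n, (f j).comp (g (j + 1) - g j)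
      = (f n).comp (g n) - ∑ j ∈ Finset.range n, (f (j + 1) - f j).comp (g (j + 1)) := by
  have telescope := Finset.sum_range_sub (fun j => (f j).comp (g j)) n
  simp only [hg, ContinuousLinearMap.comp_zero, sub_zero] at telescope
  rw [eq_sub_iff_add_eq, ← Finset.sum_add_distrib, ← telescope]
  refine Finset.sum_congr rfl fun j _ => ?_
  simp only [ContinuousLinearMap.comp_sub, ContinuousLinearMap.sub_comp]
  abel

theorem sum_sum_comp_rectDiff (f : ℕ → ℕ → Y →L[𝕜] Z) {q : ℕ → ℕ → X →L[𝕜] Y}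
    (hq_left : ∀ k, q 0 k = 0) (hq_bot : ∀ j, q j 0 = 0) (n m : ℕ) :
    ∑ j ∈ Finset.range n, ∑ k ∈ Finset.range m, (f j k).comp (rectDiff q j k)
      = (f n m).comp (q n m)
        - ∑ j ∈ Finset.range n, (f (j + 1) m - f j m).comp (q (j + 1) m)
        - ∑ k ∈ Finset.range m, (f n (k + 1) - f n k).comp (q n (k + 1))
        + ∑ j ∈ Finset.range n, ∑ k ∈ Finset.range m,
            (rectDiff f j k).comp (q (j + 1) (k + 1)) := by
  have sum_k : ∀ j, ∑ k ∈ Finset.range m, (f j k).comp (rectDiff q j k)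
      = (f j m).comp (q (j + 1) m - q j m)
        - ∑ k ∈ Finset.range m, (f j (k + 1) - f j k).comp (q (j + 1) (k + 1) - q j (k + 1)) := by
    intro j
    rw [← sum_range_comp_sub_of_zero (f j) (g := fun k => q (j + 1) k - q j k)
      (by simp only [hq_bot, sub_zero])]
    refine Finset.sum_congr rfl fun k _ => ?_
    simp only [rectDiff]
    congr 1
    abel
  have sum_j : ∀ k, ∑ j ∈ Finset.range n,
        (f j (k + 1) - f j k).comp (q (j + 1) (k + 1) - q j (k + 1))
      = (f n (k + 1) - f n k).comp (q n (k + 1))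
        - ∑ j ∈ Finset.range n, (rectDiff f j k).comp (q (j + 1) (k + 1)) := by
    intro k
    rw [sum_range_comp_sub_of_zero (fun j => f j (k + 1) - f j k) (g := fun j => q j (k + 1))
      (hq_left _)]
    congr 1
    refine Finset.sum_congr rfl fun j _ => ?_
    simp only [rectDiff]
    congr 1
    abel
  rw [Finset.sum_congr rfl fun j _ => sum_k j, Finset.sum_sub_distrib,
    sum_range_comp_sub_of_zero (fun j => f j m) (g := fun j => q j m) (hq_left m), Finset.sum_comm,
    Finset.sum_congr rfl fun k _ => sum_j k, Finset.sum_sub_distrib, Finset.sum_comm]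
  abel

theorem norm_sum_range_le_sub {V : Type*} [SeminormedAddCommGroup V] {x : ℕ → V} {u : ℕ → ℝ}
    {n : ℕ} (h : ∀ j < n, ‖x j‖ ≤ u (j + 1) - u j) : ‖∑ j ∈ Finset.range n, x j‖ ≤ u n - u 0 := by
  rw [← Finset.sum_range_sub]
  exact norm_sum_le_of_le _ fun j hj => h j (Finset.mem_range.mp hj)

theorem norm_sum_sum_comp_rectDiff_le (f : ℕ → ℕ → Y →L[𝕜] Z) {q : ℕ → ℕ → X →L[𝕜] Y}
    (hq_left : ∀ k, q 0 k = 0) (hq_bot : ∀ j, q j 0 = 0) (hq : ∀ j k, ‖q j k‖ ≤ 1)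
    {ξ ζ : ℕ → ℝ} {M γ₁ γ₂ : ℝ} {n m : ℕ} (hM : ‖f n m‖ ≤ M)
    (hf_diff₁ : ∀ j k, ‖f (j + 1) k - f j k‖ ≤ γ₁ * (ξ (j + 1) - ξ j))
    (hf_diff₂ : ∀ j k, ‖f j (k + 1) - f j k‖ ≤ γ₁ * (ζ (k + 1) - ζ k))
    (hf_rect : ∀ j k, ‖rectDiff f j k‖ ≤ γ₂ * (ξ (j + 1) - ξ j) * (ζ (k + 1) - ζ k)) :
    ‖∑ j ∈ Finset.range n, ∑ k ∈ Finset.range m, (f j k).comp (rectDiff q j k)‖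
      ≤ M + γ₁ * (ξ n - ξ 0) + γ₁ * (ζ m - ζ 0) + γ₂ * (ξ n - ξ 0) * (ζ m - ζ 0) := by
  have comp_le (A : Y →L[𝕜] Z) (j k : ℕ) : ‖A.comp (q j k)‖ ≤ ‖A‖ :=
    (A.opNorm_comp_le _).trans (mul_le_of_le_one_right (norm_nonneg A) (hq j k))
  have corner : ‖(f n m).comp (q n m)‖ ≤ M := (comp_le _ _ _).trans hM
  have edge_top : ‖∑ j ∈ Finset.range n, (f (j + 1) m - f j m).comp (q (j + 1) m)‖
      ≤ γ₁ * ξ n - γ₁ * ξ 0 :=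
    norm_sum_range_le_sub (u := fun j => γ₁ * ξ j) fun j _ =>
      (comp_le _ _ _).trans ((hf_diff₁ j m).trans_eq (by ring))
  have edge_right : ‖∑ k ∈ Finset.range m, (f n (k + 1) - f n k).comp (q n (k + 1))‖
      ≤ γ₁ * ζ m - γ₁ * ζ 0 :=
    norm_sum_range_le_sub (u := fun k => γ₁ * ζ k) fun k _ =>
      (comp_le _ _ _).trans ((hf_diff₂ n k).trans_eq (by ring))
  have interior : ‖∑ j ∈ Finset.range n, ∑ k ∈ Finset.range m,
      (rectDiff f j k).comp (q (j + 1) (k + 1))‖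
      ≤ γ₂ * ξ n * (ζ m - ζ 0) - γ₂ * ξ 0 * (ζ m - ζ 0) :=
    norm_sum_range_le_sub (u := fun j => γ₂ * ξ j * (ζ m - ζ 0)) fun j _ =>
      (norm_sum_range_le_sub (u := fun k => γ₂ * (ξ (j + 1) - ξ j) * ζ k) fun k _ =>
        (comp_le _ _ _).trans ((hf_rect j k).trans_eq (by ring))).trans_eq (by ring)
  rw [sum_sum_comp_rectDiff f hq_left hq_bot]
  refine ((norm_add_le _ _).trans (add_le_add ((norm_sub_le _ _).trans
    (add_le_add (norm_sub_le _ _) le_rfl)) le_rfl)).trans ?_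
  linarith

end SummationByParts

theorem rectC_eq_preimage (l l' m m' : ℝ) :
    rectC l l' m m' = re ⁻¹' Ico l l' ∩ im ⁻¹' Ico m m' := by
  ext z
  simp only [rectC, mem_ofPred_eq, mem_inter_iff, mem_preimage, mem_Ico, and_assoc]

theorem measurableSet_rectC (l l' m m' : ℝ) : MeasurableSet (rectC l l' m m') := by
  rw [rectC_eq_preimage]
  exact (measurable_re measurableSet_Ico).inter (measurable_im measurableSet_Ico)

theorem rectC_union_rectC_re {u v w : ℝ} (m m' : ℝ) (huv : u ≤ v) (hvw : v ≤ w) :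
    rectC u v m m' ∪ rectC v w m m' = rectC u w m m' := by
  simp only [rectC_eq_preimage, ← union_inter_distrib_right, ← preimage_union,
    Ico_union_Ico_eq_Ico huv hvw]

theorem rectC_union_rectC_im {u v w : ℝ} (l l' : ℝ) (huv : u ≤ v) (hvw : v ≤ w) :
    rectC l l' u v ∪ rectC l l' v w = rectC l l' u w := by
  simp only [rectC_eq_preimage, ← inter_union_distrib_left, ← preimage_union,
    Ico_union_Ico_eq_Ico huv hvw]

theorem disjoint_rectC_re (u v w m m' : ℝ) : Disjoint (rectC u v m m') (rectC v w m m') := by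
  simp only [rectC_eq_preimage]
  exact (Ico_disjoint_Ico_same.preimage re).mono inter_subset_left inter_subset_left

theorem disjoint_rectC_im (l l' u v w : ℝ) : Disjoint (rectC l l' u v) (rectC l l' v w) := by
  simp only [rectC_eq_preimage]
  exact (Ico_disjoint_Ico_same.preimage im).mono inter_subset_right inter_subset_right

theorem rectC_self_re (u m m' : ℝ) : rectC u u m m' = ∅ := by
  simp [rectC_eq_preimage]

theorem rectC_self_im (l l' u : ℝ) : rectC l l' u u = ∅ := by
  simp [rectC_eq_preimage]

namespace SpectralMeasure

variable (E : SpectralMeasure K)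

theorem proj_empty : E.proj ∅ = 0 := by
  have h := E.add_union MeasurableSet.empty MeasurableSet.empty (disjoint_empty ∅)
  rwa [union_self, left_eq_add] at h

theorem isStarProjection_proj {Ω : Set ℂ} (hΩ : MeasurableSet Ω) :
    IsStarProjection (E.proj Ω) where
  isIdempotentElem := by
    rw [IsIdempotentElem, ContinuousLinearMap.mul_def, ← E.mul_inter hΩ hΩ, inter_self]
  isSelfAdjoint := E.selfAdjoint hΩ

theorem norm_proj_le_one {Ω : Set ℂ} (hΩ : MeasurableSet Ω) : ‖E.proj Ω‖ ≤ 1 :=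
  (E.isStarProjection_proj hΩ).norm_le

theorem proj_rectC_add_re {u v w : ℝ} (m m' : ℝ) (huv : u ≤ v) (hvw : v ≤ w) :
    E.proj (rectC u v m m') + E.proj (rectC v w m m') = E.proj (rectC u w m m') := by
  rw [← E.add_union (measurableSet_rectC ..) (measurableSet_rectC ..) (disjoint_rectC_re ..),
    rectC_union_rectC_re m m' huv hvw]

theorem proj_rectC_add_im {u v w : ℝ} (l l' : ℝ) (huv : u ≤ v) (hvw : v ≤ w) :
    E.proj (rectC l l' u v) + E.proj (rectC l l' v w) = E.proj (rectC l l' u w) := by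
  rw [← E.add_union (measurableSet_rectC ..) (measurableSet_rectC ..) (disjoint_rectC_im ..),
    rectC_union_rectC_im l l' huv hvw]

theorem proj_rectC_eq_rectDiff {a c : ℝ} {x : ℕ → ℝ} {y : ℕ → ℝ} {j k : ℕ}
    (hax : a ≤ x j) (hx : x j ≤ x (j + 1)) (hcy : c ≤ y k) (hy : y k ≤ y (k + 1)) :
    E.proj (rectC (x j) (x (j + 1)) (y k) (y (k + 1)))
      = rectDiff (fun j k => E.proj (rectC a (x j) c (y k))) j k := by
  simp only [rectDiff]
  rw [← E.proj_rectC_add_re _ _ hax hx, ← E.proj_rectC_add_re _ _ hax hx,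
    ← E.proj_rectC_add_im (x j) (x (j + 1)) hcy hy]
  abel

end SpectralMeasure

namespace TaggedPartition

variable {a b : ℝ} (P : TaggedPartition a b)

theorem pts_le_pts {i j : ℕ} (hij : i ≤ j) (hj : j ≤ P.n) : P.pts i ≤ P.pts j := by
  induction j, hij using Nat.le_induction with
  | base => exact le_rfl
  | succ j _ ih => exact (ih (by omega)).trans (P.mono j (by omega)).le

theorem left_le_pts {j : ℕ} (hj : j ≤ P.n) : a ≤ P.pts j :=
  P.first.symm.trans_le (P.pts_le_pts j.zero_le hj)

theorem tags_mem_Ico {i : ℕ} (hi : i < P.n) : P.tags i ∈ Ico a b :=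
  ⟨(P.left_le_pts hi.le).trans (P.tag_mem i hi).1,
    (P.tag_mem i hi).2.trans_le ((P.pts_le_pts hi le_rfl).trans_eq P.last)⟩

theorem tags_le_tags {i j : ℕ} (hij : i ≤ j) (hj : j < P.n) : P.tags i ≤ P.tags j := by
  rcases hij.eq_or_lt with rfl | hlt
  · exact le_rfl
  · exact ((P.tag_mem i (hlt.trans hj)).2.le.trans (P.pts_le_pts hlt hj.le)).trans
      (P.tag_mem j hj).1

/-- Continuing the tags constantly past the last subinterval lets summation by parts evaluate
the integrand at index `P.n` without leaving `[a, b)`. -/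
def clampedTags (j : ℕ) : ℝ := P.tags (min j (P.n - 1))

theorem clampedTags_of_lt {j : ℕ} (hj : j < P.n) : P.clampedTags j = P.tags j := by
  rw [clampedTags, min_eq_left (by omega)]

theorem clampedTags_mem_Ico (j : ℕ) : P.clampedTags j ∈ Ico a b :=
  P.tags_mem_Ico (by have := P.npos; omega)

theorem monotone_clampedTags : Monotone P.clampedTags := fun _ _ hij =>
  P.tags_le_tags (by omega) (by have := P.npos; omega)

def uniform (hab : a < b) (n : ℕ) (hn : 0 < n) : TaggedPartition a b where
  n := n
  npos := hn
  pts i := a + i * ((b - a) / n)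
  tags i := a + i * ((b - a) / n)
  mono i _ := by
    have : 0 < (b - a) / n := div_pos (sub_pos.2 hab) (Nat.cast_pos.2 hn)
    push_cast
    linarith
  first := by simp
  last := by field_simp; ring
  tag_mem i _ := by
    have : 0 < (b - a) / n := div_pos (sub_pos.2 hab) (Nat.cast_pos.2 hn)
    push_cast
    constructor <;> linarith

theorem mesh_uniform (hab : a < b) (n : ℕ) (hn : 0 < n) :
    (uniform hab n hn).mesh = (b - a) / n := by
  refine (congrArg sSup ?_).trans (csSup_singleton _)
  ext r
  simp only [uniform, mem_ofPred_eq, mem_singleton_iff, Nat.cast_add, Nat.cast_one]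
  constructor
  · rintro ⟨i, -, rfl⟩
    ring
  · rintro rfl
    exact ⟨0, hn, by ring⟩

theorem exists_mesh_lt (hab : a < b) {δ : ℝ} (hδ : 0 < δ) :
    ∃ P : TaggedPartition a b, P.mesh < δ := by
  obtain ⟨N, hN⟩ := exists_nat_gt ((b - a) / δ)
  have hN₀ : 0 < N := Nat.cast_pos.1 ((div_pos (sub_pos.2 hab) hδ).trans hN)
  exact ⟨uniform hab N hN₀, by
    rw [mesh_uniform, div_lt_comm₀ (Nat.cast_pos.2 hN₀) hδ]
    exact hN⟩

end TaggedPartition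

omit [CompleteSpace H] in
theorem HasRightIntegralUnif.norm_le {E : SpectralMeasure K} {F : ℝ → ℝ → (K →L[ℂ] H)}
    {a b c d : ℝ} {J : K →L[ℂ] H} (hJ : HasRightIntegralUnif E F a b c d J) (hab : a < b)
    (hcd : c < d) {C : ℝ}
    (hC : ∀ (P : TaggedPartition a b) (Q : TaggedPartition c d), ‖rightSum E F P Q‖ ≤ C) :
    ‖J‖ ≤ C := by
  refine le_of_forall_pos_lt_add fun ε hε => ?_
  obtain ⟨δ, hδ, hJδ⟩ := hJ ε hε
  obtain ⟨P, hP⟩ := TaggedPartition.exists_mesh_lt hab hδ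
  obtain ⟨Q, hQ⟩ := TaggedPartition.exists_mesh_lt hcd hδ
  calc ‖J‖ ≤ ‖rightSum E F P Q‖ + ‖J - rightSum E F P Q‖ := norm_le_norm_add_norm_sub' _ _
    _ < C + ε := add_lt_add_of_le_of_lt (hC P Q) (norm_sub_rev J _ ▸ hJδ P Q hP hQ)

omit [CompleteSpace H] in
theorem rightSum_norm_le (E : SpectralMeasure K) (F : ℝ → ℝ → (K →L[ℂ] H))
    {a b c d γ₁ γ₂ M : ℝ} (hγ₁ : 0 ≤ γ₁) (hγ₂ : 0 ≤ γ₂)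
    (hLip : ∀ l ∈ Ico a b, ∀ l' ∈ Ico a b, ∀ m ∈ Ico c d, ∀ m' ∈ Ico c d,
      ‖F l m - F l' m'‖ ≤ γ₁ * (|l - l'| + |m - m'|))
    (hLip2 : ∀ l ∈ Ico a b, ∀ l' ∈ Ico a b, ∀ m ∈ Ico c d, ∀ m' ∈ Ico c d,
      ‖F l m - F l' m - F l m' + F l' m'‖ ≤ γ₂ * |l - l'| * |m - m'|)
    (hM : ∀ l ∈ Ico a b, ∀ m ∈ Ico c d, ‖F l m‖ ≤ M)
    (P : TaggedPartition a b) (Q : TaggedPartition c d) :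
    ‖rightSum E F P Q‖ ≤ M + γ₁ * (b - a) + γ₁ * (d - c) + γ₂ * (b - a) * (d - c) := by
  have hξ := P.clampedTags_mem_Ico
  have hζ := Q.clampedTags_mem_Ico
  have dξ (j : ℕ) : |P.clampedTags (j + 1) - P.clampedTags j|
      = P.clampedTags (j + 1) - P.clampedTags j :=
    abs_of_nonneg (sub_nonneg.2 (P.monotone_clampedTags j.le_succ))
  have dζ (k : ℕ) : |Q.clampedTags (k + 1) - Q.clampedTags k|
      = Q.clampedTags (k + 1) - Q.clampedTags k :=
    abs_of_nonneg (sub_nonneg.2 (Q.monotone_clampedTags k.le_succ))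
  have hsum : rightSum E F P Q = ∑ j ∈ Finset.range P.n, ∑ k ∈ Finset.range Q.n,
      (F (P.clampedTags j) (Q.clampedTags k)).comp
        (rectDiff (fun j k => E.proj (rectC a (P.pts j) c (Q.pts k))) j k) := by
    refine Finset.sum_congr rfl fun j hj => Finset.sum_congr rfl fun k hk => ?_
    rw [Finset.mem_range] at hj hk
    rw [P.clampedTags_of_lt hj, Q.clampedTags_of_lt hk, E.proj_rectC_eq_rectDiff
      (P.left_le_pts hj.le) (P.mono j hj).le (Q.left_le_pts hk.le) (Q.mono k hk).le]
  have hbound := norm_sum_sum_comp_rectDiff_le (fun j k => F (P.clampedTags j) (Q.clampedTags k))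
    (q := fun j k => E.proj (rectC a (P.pts j) c (Q.pts k)))
    (fun k => by simp only [P.first, rectC_self_re, E.proj_empty])
    (fun j => by simp only [Q.first, rectC_self_im, E.proj_empty])
    (fun j k => E.norm_proj_le_one (measurableSet_rectC ..)) (hM _ (hξ P.n) _ (hζ Q.n))
    (fun j k => by simpa [dξ] using hLip _ (hξ (j + 1)) _ (hξ j) _ (hζ k) _ (hζ k))
    (fun j k => by simpa [dζ] using hLip _ (hξ j) _ (hξ j) _ (hζ (k + 1)) _ (hζ k))
    (fun j k => by
      simpa only [rectDiff, dξ, dζ] using hLip2 _ (hξ (j + 1)) _ (hξ j) _ (hζ (k + 1)) _ (hζ k))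
  have hξ_le : P.clampedTags P.n - P.clampedTags 0 ≤ b - a := by
    linarith [(hξ P.n).2, (hξ 0).1]
  have hζ_le : Q.clampedTags Q.n - Q.clampedTags 0 ≤ d - c := by
    linarith [(hζ Q.n).2, (hζ 0).1]
  have hξ_nonneg : 0 ≤ P.clampedTags P.n - P.clampedTags 0 :=
    sub_nonneg.2 (P.monotone_clampedTags P.n.zero_le)
  have hζ_nonneg : 0 ≤ Q.clampedTags Q.n - Q.clampedTags 0 :=
    sub_nonneg.2 (Q.monotone_clampedTags Q.n.zero_le)
  have hγ₂ba : 0 ≤ γ₂ * (b - a) := mul_nonneg hγ₂ (hξ_nonneg.trans hξ_le)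
  rw [hsum]
  refine hbound.trans ?_
  gcongr

theorem bddAbove_norm_of_lipschitz {X : Type*} [SeminormedAddCommGroup X] {F : ℝ → ℝ → X}
    {a b c d γ₁ : ℝ} (hab : a < b) (hcd : c < d) (hγ₁ : 0 ≤ γ₁)
    (hLip : ∀ l ∈ Ico a b, ∀ l' ∈ Ico a b, ∀ m ∈ Ico c d, ∀ m' ∈ Ico c d,
      ‖F l m - F l' m'‖ ≤ γ₁ * (|l - l'| + |m - m'|)) :
    BddAbove {r : ℝ | ∃ l ∈ Ico a b, ∃ m ∈ Ico c d, r = ‖F l m‖} := by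
  refine ⟨‖F a c‖ + γ₁ * (b - a + (d - c)), ?_⟩
  rintro r ⟨l, hl, m, hm, rfl⟩
  have hdist := hLip l hl a ⟨le_rfl, hab⟩ m hm c ⟨le_rfl, hcd⟩
  rw [abs_of_nonneg (sub_nonneg.2 hl.1), abs_of_nonneg (sub_nonneg.2 hm.1)] at hdist
  have hlm : l - a + (m - c) ≤ b - a + (d - c) := by linarith [hl.2, hm.2]
  linarith [norm_le_norm_add_norm_sub' (F l m) (F a c), mul_le_mul_of_nonneg_left hlm hγ₁]

/-- under the Lipschitz hypotheses, the operator Stieltjes integral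
satisfies `‖∫_Δ F dE‖ ≤ 4 sup_Δ ‖F‖ + 2γ₁(b-a+d-c) + γ₂(b-a)(d-c)`. -/
theorem rightIntegral_norm_bound (E : SpectralMeasure K) (F : ℝ → ℝ → (K →L[ℂ] H))
    {a b c d : ℝ} (hab : a < b) (hcd : c < d) {γ₁ γ₂ : ℝ} (hγ₁ : 0 < γ₁) (hγ₂ : 0 < γ₂)
    (hLip : ∀ l ∈ Ico a b, ∀ l' ∈ Ico a b, ∀ m ∈ Ico c d, ∀ m' ∈ Ico c d,
      ‖F l m - F l' m'‖ ≤ γ₁ * (|l - l'| + |m - m'|))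
    (hLip2 : ∀ l ∈ Ico a b, ∀ l' ∈ Ico a b, ∀ m ∈ Ico c d, ∀ m' ∈ Ico c d,
      ‖F l m - F l' m - F l m' + F l' m'‖ ≤ γ₂ * |l - l'| * |m - m'|)
    (J : K →L[ℂ] H) (hJ : HasRightIntegralUnif E F a b c d J) :
    ‖J‖ ≤ 4 * sSup {r : ℝ | ∃ l ∈ Ico a b, ∃ m ∈ Ico c d, r = ‖F l m‖}
      + 2 * γ₁ * (b - a + d - c) + γ₂ * (b - a) * (d - c) := by
  set M := sSup {r : ℝ | ∃ l ∈ Ico a b, ∃ m ∈ Ico c d, r = ‖F l m‖}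
  have hM (l : ℝ) (hl : l ∈ Ico a b) (m : ℝ) (hm : m ∈ Ico c d) : ‖F l m‖ ≤ M :=
    le_csSup (bddAbove_norm_of_lipschitz hab hcd hγ₁.le hLip) ⟨l, hl, m, hm, rfl⟩
  have hM₀ : 0 ≤ M := (norm_nonneg _).trans (hM a ⟨le_rfl, hab⟩ c ⟨le_rfl, hcd⟩)
  have hJM := hJ.norm_le hab hcd (rightSum_norm_le E F hγ₁.le hγ₂.le hLip hLip2 hM)
  have hγ₁ba : 0 ≤ γ₁ * (b - a + d - c) := mul_nonneg hγ₁.le (by linarith)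
  linarith

end
end

section
/- Let Y ∈ B(H,K) be a Hilbert–Schmidt operator and E the spectral measure of a normal operator on K. Then the E-norm of Y is bounded by its Hilbert–Schmidt norm: ‖Y‖_E ≤ ‖Y‖₂, where ‖Y‖_E = (sup_{⟨Ω_k⟩} Σ_k ‖Y* E(Ω_k) Y‖)^{1/2} with the supremum over finite families of pairwise disjoint Borel subsets of ℂ. -/
open Set Complex Filter
open scoped InnerProductSpace Topology Classical

noncomputable section

variable {H K : Type*}
  [NormedAddCommGroup H] [InnerProductSpace ℂ H] [CompleteSpace H]
  [NormedAddCommGroup K] [InnerProductSpace ℂ K] [CompleteSpace K]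

/-!
Each summand `‖Y* E(Ωₖ) Y‖` equals `‖E(Ωₖ) Y‖²`, which is at most the squared Hilbert–Schmidt
norm `Σⱼ ‖E(Ωₖ) Y bⱼ‖²`. After exchanging the two sums, disjointness of the `Ωₖ` gives
`Σₖ ‖E(Ωₖ) y‖² = ‖E(⋃ₖ Ωₖ) y‖² ≤ ‖y‖²` for every column `y = Y bⱼ`.
-/

section HilbertSchmidt

variable {𝕜 E F : Type*} [RCLike 𝕜]
  [NormedAddCommGroup E] [InnerProductSpace 𝕜 E] [NormedAddCommGroup F] [InnerProductSpace 𝕜 F]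

theorem HilbertBasis.hasSum_norm_inner_sq {ι : Type*} (b : HilbertBasis ι 𝕜 E) (x : E) :
    HasSum (fun i => ‖⟪b i, x⟫_𝕜‖ ^ 2) (‖x‖ ^ 2) := by
  have hterm : ∀ i, ‖⟪b i, x⟫_𝕜‖ ^ 2 = RCLike.re (⟪x, b i⟫_𝕜 * ⟪b i, x⟫_𝕜) := fun i => by
    rw [← inner_conj_symm x (b i), RCLike.conj_mul, ← RCLike.ofReal_pow, RCLike.ofReal_re]
  simp_rw [hterm, ← inner_self_eq_norm_sq (𝕜 := 𝕜) x]
  exact (b.hasSum_inner_mul_inner x x).mapL RCLike.reCLM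

theorem ContinuousLinearMap.norm_sq_le_tsum_norm_apply_sq [CompleteSpace E] [CompleteSpace F]
    {ι : Type*} (b : HilbertBasis ι 𝕜 E) (T : E →L[𝕜] F)
    (hT : Summable fun i => ‖T (b i)‖ ^ 2) :
    ‖T‖ ^ 2 ≤ ∑' i, ‖T (b i)‖ ^ 2 := by
  set S := ∑' i, ‖T (b i)‖ ^ 2
  have hS : 0 ≤ S := tsum_nonneg fun i => sq_nonneg _
  suffices ‖adjoint T‖ ≤ √S by
    rw [← adjoint.norm_map T]
    simpa [Real.sq_sqrt hS] using pow_le_pow_left₀ (norm_nonneg _) this 2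
  refine (adjoint T).opNorm_le_bound (Real.sqrt_nonneg S) fun y => ?_
  -- Parseval for `T† y`, then Cauchy–Schwarz on each coefficient `⟪bᵢ, T† y⟫ = ⟪T bᵢ, y⟫`
  have hsq : ‖adjoint T y‖ ^ 2 ≤ (√S * ‖y‖) ^ 2 := by
    rw [← (b.hasSum_norm_inner_sq (adjoint T y)).tsum_eq, mul_pow, Real.sq_sqrt hS,
      ← tsum_mul_right]
    refine Summable.tsum_le_tsum (fun i => ?_) (b.hasSum_norm_inner_sq _).summable
      (hT.mul_right _)
    rw [adjoint_inner_right, ← mul_pow]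
    exact pow_le_pow_left₀ (norm_nonneg _) (norm_inner_le_norm _ _) 2
  exact (pow_le_pow_iff_left₀ (norm_nonneg _) (by positivity) two_ne_zero).mp hsq

end HilbertSchmidt

namespace IsStarProjection

variable {𝕜 E F : Type*} [RCLike 𝕜]
  [NormedAddCommGroup E] [InnerProductSpace 𝕜 E] [CompleteSpace E]
  [NormedAddCommGroup F] [InnerProductSpace 𝕜 F] [CompleteSpace F]
  {p : E →L[𝕜] E}

open ContinuousLinearMap

theorem re_inner_apply_self (hp : IsStarProjection p) (x : E) :
    RCLike.re ⟪x, p x⟫_𝕜 = ‖p x‖ ^ 2 := by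
  have hidem : p (p x) = p x := congr($(hp.isIdempotentElem.eq) x)
  rw [← hidem, ← adjoint_inner_left, (isSelfAdjoint_iff'.mp hp.isSelfAdjoint), hidem,
    inner_self_eq_norm_sq]

theorem norm_apply_le (hp : IsStarProjection p) (x : E) : ‖p x‖ ≤ ‖x‖ :=
  (p.le_opNorm x).trans (mul_le_of_le_one_left (norm_nonneg x) (hp.norm_le p))

theorem norm_adjoint_comp_comp (hp : IsStarProjection p) (T : F →L[𝕜] E) :
    ‖(adjoint T).comp (p.comp T)‖ = ‖p.comp T‖ ^ 2 := by
  have hsa : adjoint p = p := isSelfAdjoint_iff'.mp hp.isSelfAdjoint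
  have hidem : p.comp p = p := hp.isIdempotentElem.eq
  rw [sq, ← norm_adjoint_comp_self, adjoint_comp, hsa, comp_assoc, ← comp_assoc p, hidem]

end IsStarProjection

namespace SpectralMeasure

variable (E : SpectralMeasure K)

theorem proj_biUnion_range {Ω : ℕ → Set ℂ} (hΩ : ∀ i, MeasurableSet (Ω i)) {n : ℕ}
    (hdisj : ∀ i < n, ∀ j < n, i ≠ j → Disjoint (Ω i) (Ω j)) :
    E.proj (⋃ i ∈ Finset.range n, Ω i) = ∑ i ∈ Finset.range n, E.proj (Ω i) := by
  induction n with
  | zero => simp [proj_empty]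
  | succ n ih =>
    have hprev : Disjoint (⋃ i ∈ Finset.range n, Ω i) (Ω n) := by
      simp only [disjoint_iUnion_left, Finset.mem_range]
      exact fun i hi => hdisj i (by omega) n (by omega) hi.ne
    rw [Finset.range_add_one, Finset.set_biUnion_insert, union_comm,
      E.add_union (Finset.measurableSet_biUnion _ fun i _ => hΩ i) (hΩ n) hprev,
      ih fun i hi j hj => hdisj i (by omega) j (by omega), Finset.sum_insert (by simp),
      add_comm]

theorem sum_norm_proj_apply_sq_le {Ω : ℕ → Set ℂ} (hΩ : ∀ i, MeasurableSet (Ω i)) {n : ℕ}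
    (hdisj : ∀ i < n, ∀ j < n, i ≠ j → Disjoint (Ω i) (Ω j)) (x : K) :
    ∑ i ∈ Finset.range n, ‖E.proj (Ω i) x‖ ^ 2 ≤ ‖x‖ ^ 2 := by
  have hU :=
    E.isStarProjection_proj (Finset.measurableSet_biUnion (Finset.range n) fun i _ => hΩ i)
  calc ∑ i ∈ Finset.range n, ‖E.proj (Ω i) x‖ ^ 2
      = RCLike.re ⟪x, E.proj (⋃ i ∈ Finset.range n, Ω i) x⟫_ℂ := by
        simp only [E.proj_biUnion_range hΩ hdisj, sum_apply, inner_sum,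
          map_sum, (E.isStarProjection_proj (hΩ _)).re_inner_apply_self]
    _ = ‖E.proj (⋃ i ∈ Finset.range n, Ω i) x‖ ^ 2 := hU.re_inner_apply_self x
    _ ≤ ‖x‖ ^ 2 := pow_le_pow_left₀ (norm_nonneg _) (hU.norm_apply_le x) 2

end SpectralMeasure

open ContinuousLinearMap in
theorem le_tsum_norm_apply_sq_of_mem_EnormSet (E : SpectralMeasure K) (Y : H →L[ℂ] K)
    {ι : Type*} (b : HilbertBasis ι ℂ H) (hHS : Summable fun i => ‖Y (b i)‖ ^ 2)
    {r : ℝ} (hr : r ∈ EnormSet E Y) : r ≤ ∑' i, ‖Y (b i)‖ ^ 2 := by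
  obtain ⟨n, Ω, hΩ, hdisj, rfl⟩ := hr
  have hcol : ∀ k j, ‖(E.proj (Ω k)).comp Y (b j)‖ ^ 2 ≤ ‖Y (b j)‖ ^ 2 := fun k j =>
    pow_le_pow_left₀ (norm_nonneg _) ((E.isStarProjection_proj (hΩ k)).norm_apply_le _) 2
  have hsummable : ∀ k, Summable fun j => ‖(E.proj (Ω k)).comp Y (b j)‖ ^ 2 := fun k =>
    hHS.of_nonneg_of_le (fun j => sq_nonneg _) (hcol k)
  calc ∑ k ∈ Finset.range n, ‖(adjoint Y).comp ((E.proj (Ω k)).comp Y)‖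
      = ∑ k ∈ Finset.range n, ‖(E.proj (Ω k)).comp Y‖ ^ 2 :=
        Finset.sum_congr rfl fun k _ => (E.isStarProjection_proj (hΩ k)).norm_adjoint_comp_comp Y
    _ ≤ ∑ k ∈ Finset.range n, ∑' j, ‖(E.proj (Ω k)).comp Y (b j)‖ ^ 2 :=
        Finset.sum_le_sum fun k _ => norm_sq_le_tsum_norm_apply_sq b _ (hsummable k)
    _ = ∑' j, ∑ k ∈ Finset.range n, ‖(E.proj (Ω k)).comp Y (b j)‖ ^ 2 :=
        (Summable.tsum_finsetSum fun k _ => hsummable k).symm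
    _ ≤ ∑' j, ‖Y (b j)‖ ^ 2 := by
        have hrow : ∀ j, ∑ k ∈ Finset.range n, ‖(E.proj (Ω k)).comp Y (b j)‖ ^ 2
            ≤ ‖Y (b j)‖ ^ 2 := fun j => E.sum_norm_proj_apply_sq_le hΩ hdisj (Y (b j))
        exact Summable.tsum_le_tsum hrow
          (hHS.of_nonneg_of_le (fun j => Finset.sum_nonneg fun k _ => sq_nonneg _) hrow) hHS

/-- for a Hilbert–Schmidt operator `Y` (w.r.t. a Hilbert basis `b`),
the `E`-norm of `Y` is finite and bounded by the Hilbert–Schmidt norm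
`‖Y‖₂ = (Σ_i ‖Y b_i‖²)^{1/2}`. -/
theorem Enorm_le_hilbertSchmidt (E : SpectralMeasure K) (Y : H →L[ℂ] K)
    {ι : Type*} (b : HilbertBasis ι ℂ H) (hHS : Summable fun i => ‖Y (b i)‖ ^ 2) :
    BddAbove (EnormSet E Y) ∧ Enorm E Y ≤ Real.sqrt (∑' i, ‖Y (b i)‖ ^ 2) := by
  have hbound : ∀ r ∈ EnormSet E Y, r ≤ ∑' i, ‖Y (b i)‖ ^ 2 :=
    fun r hr => le_tsum_norm_apply_sq_of_mem_EnormSet E Y b hHS hr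
  exact ⟨⟨_, hbound⟩, Real.sqrt_le_sqrt (Real.sSup_le hbound (tsum_nonneg fun i => sq_nonneg _))⟩

end
end

section
/- Let A, C be densely defined closed operators on H, K, B ∈ B(K,H), D ∈ B(H,K). If X ∈ B(H,K) is a weak solution of the Riccati equation XA - CX + XBX = D (i.e., ⟨XAf,g⟩ - ⟨Xf,C*g⟩ + ⟨XBXf,g⟩ = ⟨Df,g⟩ for all f ∈ Dom(A), g ∈ Dom(C*)), then X is a strong solution: X maps Dom(A) into Dom(C) and XAf - CXf + XBXf = Df for all f ∈ Dom(A). -/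
/-!
Moving `XBX` to the right-hand side turns the Riccati equation into the Sylvester equation
`XA - CX = D'` with the bounded right-hand side `D' = D - XBX`. A weak solution of that
equation says that `(Xf, XAf - D'f)` lies in the graph of `C**`, and `C** = C` because the graph
of the closed operator `C` is a closed subspace of `K ⊕ K`, hence equal to its double orthogonal
complement.
-/

open Set Complex Filter
open scoped InnerProductSpace Topology Classical

noncomputable section

variable {H K : Type*}
  [NormedAddCommGroup H] [InnerProductSpace ℂ H] [CompleteSpace H]
  [NormedAddCommGroup K] [InnerProductSpace ℂ K] [CompleteSpace K]

namespace Submodule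

variable {𝕜 E F : Type*} [RCLike 𝕜]
  [NormedAddCommGroup E] [InnerProductSpace 𝕜 E] [CompleteSpace E]
  [NormedAddCommGroup F] [InnerProductSpace 𝕜 F] [CompleteSpace F]

theorem adjoint_adjoint_le {g : Submodule 𝕜 (E × F)} (hg : IsClosed (g : Set (E × F))) :
    g.adjoint.adjoint ≤ g := by
  intro z hz
  rw [mem_adjoint_iff] at hz
  let S : Submodule 𝕜 (WithLp 2 (E × F)) :=
    g.comap (WithLp.linearEquiv 2 𝕜 (E × F)).toLinearMap
  have : CompleteSpace S :=
    (hg.preimage (WithLp.prod_continuous_ofLp 2 E F)).completeSpace_coe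
  suffices WithLp.toLp 2 z ∈ Sᗮᗮ by rwa [orthogonal_orthogonal] at this
  refine (mem_orthogonal _ _).2 fun u hu => ?_
  have hu_adjoint : (u.ofLp.2, -u.ofLp.1) ∈ g.adjoint := by
    refine (mem_adjoint_iff _ _).2 fun a b hab => ?_
    have hu_ab := (mem_orthogonal' _ _).1 hu (WithLp.toLp 2 (a, b)) hab
    rw [WithLp.prod_inner_apply] at hu_ab
    rw [inner_neg_right, sub_neg_eq_add, ← inner_conj_symm b, ← inner_conj_symm a, ← map_add,
      add_comm, hu_ab, map_zero]
  have hz_u := hz _ _ hu_adjoint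
  rw [inner_neg_left] at hz_u
  rw [WithLp.prod_inner_apply, WithLp.ofLp_toLp]
  linear_combination -hz_u

end Submodule

namespace LinearPMap

variable {𝕜 E F : Type*} [RCLike 𝕜]
  [NormedAddCommGroup E] [InnerProductSpace 𝕜 E] [CompleteSpace E]
  [NormedAddCommGroup F] [InnerProductSpace 𝕜 F] [CompleteSpace F]

theorem mem_graph_of_inner_adjoint {T : E →ₗ.[𝕜] F} (hT : Dense (T.domain : Set E))
    (hTc : T.IsClosed) {x : E} {y : F} (h : ∀ g : T†.domain, ⟪T† g, x⟫_𝕜 = ⟪(g : F), y⟫_𝕜) :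
    (x, y) ∈ T.graph := by
  refine Submodule.adjoint_adjoint_le hTc ?_
  rw [← adjoint_graph_eq_graph_adjoint hT, Submodule.mem_adjoint_iff]
  rintro a b hab
  obtain ⟨g, rfl, rfl⟩ := (mem_graph_iff _).1 hab
  exact sub_eq_zero.2 (h g)

end LinearPMap

omit [CompleteSpace H] in
theorem IsWeakSolutionRiccati.isWeakSolutionSylvester {A : H →ₗ.[ℂ] H} {C : K →ₗ.[ℂ] K}
    {B : K →L[ℂ] H} {D X : H →L[ℂ] K} (hw : IsWeakSolutionRiccati A C B D X) :
    IsWeakSolutionSylvester A C (D - X.comp (B.comp X)) X := fun f g => by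
  simp only [sub_apply, ContinuousLinearMap.comp_apply, inner_sub_right]
  linear_combination hw f g

omit [CompleteSpace H] in
theorem IsWeakSolutionSylvester.isStrongSolutionSylvester {A : H →ₗ.[ℂ] H} {C : K →ₗ.[ℂ] K}
    {D X : H →L[ℂ] K} (hCd : Dense (C.domain : Set K)) (hCc : C.IsClosed)
    (hw : IsWeakSolutionSylvester A C D X) : IsStrongSolutionSylvester A C D X := fun f => by
  have hgraph : (X f, X (A f) - D f) ∈ C.graph :=
    C.mem_graph_of_inner_adjoint hCd hCc fun g => by
      rw [inner_sub_right]
      linear_combination -hw f g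
  obtain ⟨⟨y, hy⟩, rfl : y = X f, hCy⟩ := C.mem_graph_iff.1 hgraph
  exact ⟨hy, by rw [hCy]; exact sub_sub_cancel _ _⟩

omit [CompleteSpace H] [CompleteSpace K] in
theorem IsStrongSolutionSylvester.isStrongSolutionRiccati {A : H →ₗ.[ℂ] H} {C : K →ₗ.[ℂ] K}
    {B : K →L[ℂ] H} {D X : H →L[ℂ] K}
    (hs : IsStrongSolutionSylvester A C (D - X.comp (B.comp X)) X) :
    IsStrongSolutionRiccati A C B D X := fun f => by
  obtain ⟨hf, hCf⟩ := hs f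
  refine ⟨hf, ?_⟩
  rw [sub_apply, ContinuousLinearMap.comp_apply, ContinuousLinearMap.comp_apply] at hCf
  rw [hCf]
  abel

theorem weak_implies_strong_riccati_general (A : H →ₗ.[ℂ] H) (C : K →ₗ.[ℂ] K)
    (hCd : Dense (C.domain : Set K)) (hCc : C.IsClosed)
    (B : K →L[ℂ] H) (D X : H →L[ℂ] K) (hw : IsWeakSolutionRiccati A C B D X) :
    IsStrongSolutionRiccati A C B D X :=
  (hw.isWeakSolutionSylvester.isStrongSolutionSylvester hCd hCc).isStrongSolutionRiccati

/-- any weak solution of the Riccati equation `XA - CX + XBX = D`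
(for densely defined closed `A`, `C`, bounded `B`, `D`) is a strong solution. -/
theorem weak_implies_strong_riccati (A : H →ₗ.[ℂ] H) (C : K →ₗ.[ℂ] K)
    (hAd : Dense (A.domain : Set H)) (hAc : A.IsClosed)
    (hCd : Dense (C.domain : Set K)) (hCc : C.IsClosed)
    (B : K →L[ℂ] H) (D X : H →L[ℂ] K) (hw : IsWeakSolutionRiccati A C B D X) :
    IsStrongSolutionRiccati A C B D X :=
  weak_implies_strong_riccati_general A C hCd hCc B D X hw

end
end

section
/- Let A, C be densely defined closed operators on H, K, B ∈ B(K,H), D ∈ B(H,K). Then X ∈ B(H,K) is a weak (hence strong) solution of the Riccati equation XA - CX + XBX = D if and only if Y = -X* is a weak (hence strong) solution of the dual Riccati equation YC* - A*Y + YB*Y = D*. -/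
open Set Complex Filter
open scoped InnerProductSpace Topology Classical

noncomputable section

variable {H K : Type*}
  [NormedAddCommGroup H] [InnerProductSpace ℂ H] [CompleteSpace H]
  [NormedAddCommGroup K] [InnerProductSpace ℂ K] [CompleteSpace K]

/-- `Y` is a weak solution of the dual Riccati equation `YC* - A*Y + YB*Y = D*`. -/
def IsWeakSolutionRiccatiDual (A : H →ₗ.[ℂ] H) (C : K →ₗ.[ℂ] K)
    (B : K →L[ℂ] H) (D : H →L[ℂ] K) (Y : K →L[ℂ] H) : Prop :=
  ∀ (g : C.adjoint.domain) (f : A.domain),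
    ⟪(f : H), Y (C.adjoint g)⟫_ℂ - ⟪A f, Y (g : K)⟫_ℂ
      + ⟪(f : H), Y ((ContinuousLinearMap.adjoint B) (Y (g : K)))⟫_ℂ
      = ⟪(f : H), (ContinuousLinearMap.adjoint D) (g : K)⟫_ℂ

/-- `X` is a weak (hence strong) solution of `XA - CX + XBX = D`
iff `Y = -X*` is a weak (hence strong) solution of `YC* - A*Y + YB*Y = D*`. -/
theorem weak_riccati_dual_iff (A : H →ₗ.[ℂ] H) (C : K →ₗ.[ℂ] K)
    (hAd : Dense (A.domain : Set H)) (hAc : A.IsClosed)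
    (hCd : Dense (C.domain : Set K)) (hCc : C.IsClosed)
    (B : K →L[ℂ] H) (D X : H →L[ℂ] K) :
    IsWeakSolutionRiccati A C B D X ↔
      IsWeakSolutionRiccatiDual A C B D (-(ContinuousLinearMap.adjoint X)) := by
  have main : ∀ (f : A.domain) (g : C.adjoint.domain),
      (⟪(g : K), X (A f)⟫_ℂ - ⟪C.adjoint g, X (f : H)⟫_ℂ
        + ⟪(g : K), X (B (X (f : H)))⟫_ℂ = ⟪(g : K), D (f : H)⟫_ℂ) ↔
      (⟪(f : H), (-(ContinuousLinearMap.adjoint X)) (C.adjoint g)⟫_ℂ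
        - ⟪A f, (-(ContinuousLinearMap.adjoint X)) (g : K)⟫_ℂ
        + ⟪(f : H), (-(ContinuousLinearMap.adjoint X))
            ((ContinuousLinearMap.adjoint B)
              ((-(ContinuousLinearMap.adjoint X)) (g : K)))⟫_ℂ
        = ⟪(f : H), (ContinuousLinearMap.adjoint D) (g : K)⟫_ℂ) := by
    intro f g
    have h1 : ⟪(f : H), (-(ContinuousLinearMap.adjoint X)) (C.adjoint g)⟫_ℂ
        = -(starRingEnd ℂ) ⟪C.adjoint g, X (f : H)⟫_ℂ := by
      simp [ContinuousLinearMap.neg_apply, inner_neg_right,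
        ContinuousLinearMap.adjoint_inner_right, inner_conj_symm]
    have h2 : ⟪A f, (-(ContinuousLinearMap.adjoint X)) (g : K)⟫_ℂ
        = -(starRingEnd ℂ) ⟪(g : K), X (A f)⟫_ℂ := by
      simp [ContinuousLinearMap.neg_apply, inner_neg_right,
        ContinuousLinearMap.adjoint_inner_right, inner_conj_symm]
    have h3 : ⟪(f : H), (-(ContinuousLinearMap.adjoint X))
          ((ContinuousLinearMap.adjoint B)
            ((-(ContinuousLinearMap.adjoint X)) (g : K)))⟫_ℂ
        = (starRingEnd ℂ) ⟪(g : K), X (B (X (f : H)))⟫_ℂ := by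
      simp only [ContinuousLinearMap.neg_apply, inner_neg_right, map_neg, neg_neg]
      rw [ContinuousLinearMap.adjoint_inner_right,
        ContinuousLinearMap.adjoint_inner_right,
        ContinuousLinearMap.adjoint_inner_right, inner_conj_symm]
    have h4 : ⟪(f : H), (ContinuousLinearMap.adjoint D) (g : K)⟫_ℂ
        = (starRingEnd ℂ) ⟪(g : K), D (f : H)⟫_ℂ := by
      rw [ContinuousLinearMap.adjoint_inner_right, inner_conj_symm]
    rw [h1, h2, h3, h4]
    constructor
    · intro h
      have := congrArg (starRingEnd ℂ) h
      simp only [map_sub, map_add] at this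
      linear_combination this
    · intro h
      have := congrArg (starRingEnd ℂ) h
      simp only [map_sub, map_add, map_neg, Complex.conj_conj] at this
      linear_combination this
  constructor
  · intro h g f
    exact (main f g).mp (h f g)
  · intro h f g
    exact (main f g).mpr (h g f)

end
end
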